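/- arXiv:1605.00127 — 9 statements merged into one kernel-verified Lean document; each statement's English description precedes it below -/
import Mathlib

section
/- The Gauss sum ∑_{j=0}^{d-1} ζ^{j²} has modulus √d; equivalently, setting ω = d^{-1/2} ∑_{j=0}^{d-1} ζ^{j²}, one has |ω| = 1. -/
/-!
Since `ζ ^ (2 * d * j) = q ^ (d * j) = 1` and `ζ ^ d ^ 2 = 1`, the map `j ↦ ζ ^ (j ^ 2)` is
`d`-periodic. For `S = ∑ j, ζ ^ (j ^ 2)` and `ζ̄ = ζ⁻¹`, expand `S * S̄ = ∑ y, ζ⁻¹ ^ (y ^ 2) * S` and shift the inner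
sum by `y`: as `ζ ^ ((y + m) ^ 2) = ζ ^ (y ^ 2) * ζ ^ (m ^ 2) * q ^ (y * m)`, this gives
`∑ m, ζ ^ (m ^ 2) * ∑ y, q ^ (m * y)`, and by orthogonality of the `d`-th roots of unity only
`m = 0` survives, leaving `|S| ^ 2 = d`.
-/

open Finset

theorem pow_add_sq {M : Type*} [CommMonoid M] (ζ : M) (a b : ℕ) :
    ζ ^ ((a + b) ^ 2) = ζ ^ (a ^ 2) * ζ ^ (b ^ 2) * (ζ ^ 2) ^ (a * b) := by
  rw [← pow_mul, ← pow_add, ← pow_add]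
  ring_nf

theorem periodic_pow_sq {M : Type*} [CommMonoid M] {ζ : M} {d : ℕ} (hq : (ζ ^ 2) ^ d = 1)
    (hζ : ζ ^ d ^ 2 = 1) : Function.Periodic (fun n : ℕ ↦ ζ ^ (n ^ 2)) d := by
  intro n
  dsimp only
  rw [pow_add_sq, hζ, pow_mul', hq, one_pow, mul_one, mul_one]

theorem Function.Periodic.sum_range_add {M : Type*} [AddCancelCommMonoid M] {f : ℕ → M} {d : ℕ}
    (hf : Function.Periodic f d) (y : ℕ) : ∑ x ∈ range d, f (y + x) = ∑ x ∈ range d, f x := by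
  induction y with
  | zero => simp
  | succ y ih =>
    have hshift := (sum_range_succ' (fun x ↦ f (y + x)) d).symm.trans
      (sum_range_succ (fun x ↦ f (y + x)) d)
    rw [add_zero, hf y] at hshift
    rw [← ih, ← add_right_cancel hshift]
    simp only [add_assoc, add_comm 1]

theorem geom_sum_eq_zero_of_pow_eq_one {R : Type*} [CommRing R] [IsDomain R] {x : R} {n : ℕ}
    (hx : x ≠ 1) (hxn : x ^ n = 1) : ∑ i ∈ range n, x ^ i = 0 := by
  refine eq_zero_of_ne_zero_of_mul_left_eq_zero (sub_ne_zero_of_ne hx.symm) ?_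
  rw [mul_neg_geom_sum, hxn, sub_self]

theorem IsPrimitiveRoot.sum_pow_mul_eq_zero {R : Type*} [CommRing R] [IsDomain R] {q : R} {d m : ℕ}
    (hq : IsPrimitiveRoot q d) (hm₀ : m ≠ 0) (hmd : m < d) : ∑ y ∈ range d, q ^ (m * y) = 0 := by
  simp only [pow_mul]
  refine geom_sum_eq_zero_of_pow_eq_one (hq.pow_ne_one_of_pos_of_lt hm₀ hmd) ?_
  rw [← pow_mul, mul_comm, pow_mul, hq.pow_eq_one, one_pow]

theorem sum_pow_sq_mul_sum_inv_pow_sq {K : Type*} [Field K] {d : ℕ} {q ζ : K}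
    (hq : IsPrimitiveRoot q d) (hζ2 : ζ ^ 2 = q) (hζd : ζ ^ d ^ 2 = 1) :
    (∑ j ∈ range d, ζ ^ (j ^ 2)) * ∑ j ∈ range d, ζ⁻¹ ^ (j ^ 2) = d := by
  rcases Nat.eq_zero_or_pos d with rfl | hd
  · simp
  have hζ0 : ζ ≠ 0 := by rintro rfl; simp [hd.ne'] at hζd
  have hper := periodic_pow_sq (by rw [hζ2, hq.pow_eq_one]) hζd
  calc (∑ j ∈ range d, ζ ^ (j ^ 2)) * ∑ j ∈ range d, ζ⁻¹ ^ (j ^ 2)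
      = ∑ y ∈ range d, ∑ m ∈ range d, ζ⁻¹ ^ (y ^ 2) * ζ ^ ((y + m) ^ 2) := by
        rw [mul_comm, sum_mul]
        refine sum_congr rfl fun y _ ↦ ?_
        rw [← hper.sum_range_add y, mul_sum]
    _ = ∑ m ∈ range d, ζ ^ (m ^ 2) * ∑ y ∈ range d, q ^ (m * y) := by
        simp only [mul_sum]
        rw [sum_comm]
        refine sum_congr rfl fun m _ ↦ sum_congr rfl fun y _ ↦ ?_
        rw [pow_add_sq, hζ2, inv_pow, mul_comm m y]
        field_simp
    _ = d := by
        rw [sum_eq_single_of_mem 0 (mem_range.2 hd)]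
        · simp
        · intro m hm hm₀
          rw [hq.sum_pow_mul_eq_zero hm₀ (mem_range.1 hm), mul_zero]

/-- The Gauss sum `∑_{j=0}^{d-1} ζ^{j²}` has modulus `√d`;
equivalently, `ω = d^{-1/2} ∑_{j=0}^{d-1} ζ^{j²}` satisfies `|ω| = 1`.
Here `d ≥ 1`, `q = exp(2πi/d)`, `ζ² = q`, and `ζ^{d²} = 1`. -/
theorem stmt_1 (d : ℕ) (hd : 1 ≤ d) (q ζ : ℂ)
    (hq : q = Complex.exp (2 * Real.pi * Complex.I / d))
    (hζ2 : ζ ^ 2 = q) (hζd : ζ ^ d ^ 2 = 1) :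
    ‖∑ j ∈ Finset.range d, ζ ^ (j ^ 2)‖ = Real.sqrt d ∧
    ‖(Real.sqrt d : ℂ)⁻¹ * ∑ j ∈ Finset.range d, ζ ^ (j ^ 2)‖ = 1 := by
  have hprim : IsPrimitiveRoot q d := hq ▸ Complex.isPrimitiveRoot_exp d (by omega)
  have hconj : starRingEnd ℂ ζ = ζ⁻¹ :=
    (Complex.inv_eq_conj (Complex.norm_eq_one_of_pow_eq_one hζd (by positivity))).symm
  have hnormSq : ‖∑ j ∈ range d, ζ ^ (j ^ 2)‖ ^ 2 = d := by
    have := sum_pow_sq_mul_sum_inv_pow_sq hprim hζ2 hζd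
    rw [← hconj] at this
    simp only [← map_pow, ← map_sum, Complex.mul_conj'] at this
    exact_mod_cast this
  have hnorm : ‖∑ j ∈ range d, ζ ^ (j ^ 2)‖ = Real.sqrt d := by
    rw [← hnormSq, Real.sqrt_sq (norm_nonneg _)]
  refine ⟨hnorm, ?_⟩
  have hsqrt : Real.sqrt d ≠ 0 := Real.sqrt_ne_zero'.2 (by exact_mod_cast hd)
  rw [norm_mul, hnorm, norm_inv, Complex.norm_real, Real.norm_of_nonneg (Real.sqrt_nonneg _),
    inv_mul_cancel₀ hsqrt]
end

section
/- Let k be an integer and let T be a d×d complex matrix of charge k, i.e. Z·T = q^k·(T·Z). Then C_Z (T ⊗ 1) C_Z⁻¹ = T ⊗ Z^k, where C_Z is the controlled-Z gate on 2-qudits. -/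
open Kronecker

/-- The qudit Pauli matrix `Z`, with `Z e_k = q^k e_k`. -/
noncomputable def Zmat (d : ℕ) (q : ℂ) : Matrix (ZMod d) (ZMod d) ℂ :=
  Matrix.of fun j k => if j = k then q ^ k.val else 0

/-- The controlled-Z gate on 2-qudits: `C_Z e_{(k₁,k₂)} = q^{k₁k₂} e_{(k₁,k₂)}`. -/
noncomputable def CZmat (d : ℕ) (q : ℂ) :
    Matrix (ZMod d × ZMod d) (ZMod d × ZMod d) ℂ :=
  Matrix.of fun p r => if p = r then q ^ (r.1.val * r.2.val) else 0

namespace Matrix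

variable {K : Type*} [Field K] {m n : Type*} [Fintype m] [DecidableEq m] [Fintype n]
  [DecidableEq n]

theorem inv_diagonal_of_ne_zero {v : n → K} (hv : ∀ i, v i ≠ 0) :
    (diagonal v)⁻¹ = diagonal fun i => (v i)⁻¹ :=
  inv_eq_right_inv (by simp [hv])

theorem diagonal_zpow {v : n → K} (hv : ∀ i, v i ≠ 0) (k : ℤ) :
    diagonal v ^ k = diagonal fun i => v i ^ k := by
  cases k with
  | ofNat k => simp [diagonal_pow]
  | negSucc k =>
    rw [zpow_negSucc, diagonal_pow,
      inv_diagonal_of_ne_zero (v := v ^ (k + 1)) fun i => pow_ne_zero _ (hv i)]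
    simp

theorem apply_eq_zero_or_of_diagonal_mul_eq_smul_mul_diagonal {u : m → K} {c : K}
    {T : Matrix m m K} (hT : diagonal u * T = c • (T * diagonal u)) (a b : m) :
    T a b = 0 ∨ u a = c * u b := by
  have h := congr_fun₂ hT a b
  simp only [diagonal_mul, mul_diagonal, smul_apply, smul_eq_mul] at h
  by_cases hab : T a b = 0
  · exact .inl hab
  · exact .inr (mul_right_cancel₀ hab (by linear_combination h))

/-- The conjugation multiplies the entry of `T ⊗ 1` at `((a, b), (a', b))` by
`(u a / u a') ^ e b`, and the charge condition makes `u a / u a' = c` wherever `T a a' ≠ 0`. -/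
theorem diagonal_mul_kronecker_one_mul_inv_diagonal {u : m → K} (hu : ∀ a, u a ≠ 0)
    (e : n → ℕ) {c : K} {T : Matrix m m K} (hT : diagonal u * T = c • (T * diagonal u)) :
    diagonal (fun p : m × n => u p.1 ^ e p.2) * (T ⊗ₖ 1) *
        (diagonal fun p : m × n => u p.1 ^ e p.2)⁻¹ =
      T ⊗ₖ diagonal fun j => c ^ e j := by
  rw [inv_diagonal_of_ne_zero fun p : m × n => pow_ne_zero (e p.2) (hu p.1)]
  ext ⟨a, b⟩ ⟨a', b'⟩
  simp only [mul_diagonal, diagonal_mul, kronecker_apply, one_apply, diagonal_apply]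
  by_cases hb : b = b'
  · subst hb
    simp only [if_true, mul_one]
    rcases apply_eq_zero_or_of_diagonal_mul_eq_smul_mul_diagonal hT a a' with h0 | hc
    · simp [h0]
    · have hu' : u a' ^ e b ≠ 0 := pow_ne_zero _ (hu a')
      field_simp
      rw [hc, mul_pow]
      ring
  · simp [hb]

end Matrix

open Matrix

theorem Zmat_eq_diagonal (d : ℕ) (q : ℂ) : Zmat d q = diagonal fun j => q ^ j.val := by
  ext j k
  by_cases h : j = k <;> simp [Zmat, diagonal, h]

theorem CZmat_eq_diagonal (d : ℕ) (q : ℂ) :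
    CZmat d q = diagonal fun p : ZMod d × ZMod d => (q ^ p.1.val) ^ p.2.val := by
  ext p r
  by_cases h : p = r <;> simp [CZmat, diagonal, h, pow_mul]

theorem Zmat_zpow (d : ℕ) [NeZero d] {q : ℂ} (hq : q ≠ 0) (k : ℤ) :
    Zmat d q ^ k = diagonal fun j : ZMod d => (q ^ k) ^ j.val := by
  rw [Zmat_eq_diagonal, diagonal_zpow fun j => pow_ne_zero _ hq]
  congr 1
  ext j
  rw [← zpow_natCast, ← zpow_natCast, ← _root_.zpow_mul, ← _root_.zpow_mul, mul_comm]

/-- if `T` has charge `k`, i.e. `Z·T = q^k·(T·Z)`, then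
`C_Z (T ⊗ 1) C_Z⁻¹ = T ⊗ Z^k`. -/
theorem stmt_5 (d : ℕ) [NeZero d] (q : ℂ)
    (hq : q = Complex.exp (2 * Real.pi * Complex.I / d)) (k : ℤ)
    (T : Matrix (ZMod d) (ZMod d) ℂ)
    (hT : Zmat d q * T = q ^ k • (T * Zmat d q)) :
    CZmat d q * (T ⊗ₖ (1 : Matrix (ZMod d) (ZMod d) ℂ)) * (CZmat d q)⁻¹
      = T ⊗ₖ (Zmat d q ^ k) := by
  have hq0 : q ≠ 0 := hq ▸ Complex.exp_ne_zero _
  rw [Zmat_eq_diagonal] at hT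
  rw [CZmat_eq_diagonal, Zmat_zpow d hq0]
  exact diagonal_mul_kronecker_one_mul_inv_diagonal (fun j => pow_ne_zero _ hq0) ZMod.val hT
end

section
/- The string Fourier transform F_s on n-qudits is unitary: F_s · F_sᴴ = 1 and F_sᴴ · F_s = 1. -/
/-!
Write `q ^ k` as `ψ k` for the standard additive character `ψ` of `ZMod d`. For `|ℓ| = |ℓ'|`,
the entry `(F_s F_sᴴ)(ℓ, ℓ')` is `d^{1-n} ∑_{|k| = |ℓ|} ψ (∑_j c_j k_j)`, where
`c_j = ∑_{i<j} (ℓ'_i - ℓ_i)` are the partial sums of `ℓ' - ℓ`, the phases `ζ^{|ℓ|²}` cancelling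
since `|ζ| = 1`. Solving the charge constraint for `k_0` turns this into a product of `n - 1`
complete character sums `∑_x ψ (x (c_j - c_0))`, which is `d^{n-1}` if all `c_j` equal
`c_0 = 0` and `0` otherwise. Since `|ℓ| = |ℓ'|`, all partial sums of `ℓ' - ℓ` vanish exactly
when `ℓ = ℓ'`.
-/

open Matrix Finset

/-- The string Fourier transform `F_s` on `n`-qudits: its `(ℓ, k)` entry equals
`d^{(1-n)/2} · ζ^{|ℓ|²} · ∏_{j₁ < j₂} q^{-ℓ_{j₁} k_{j₂}}` if `|ℓ| = |k|`, and `0` otherwise. -/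
noncomputable def SFT (d n : ℕ) (q ζ : ℂ) :
    Matrix (Fin n → ZMod d) (Fin n → ZMod d) ℂ :=
  Matrix.of fun l k =>
    if (∑ j, l j) = (∑ j, k j) then
      (Real.sqrt d : ℂ) ^ (1 - (n : ℤ)) * ζ ^ (∑ j, l j).val ^ 2 *
        ∏ p ∈ Finset.univ.filter (fun p : Fin n × Fin n => p.1 < p.2),
          q ^ (-(((l p.1).val * (k p.2).val : ℕ) : ℤ))
    else 0

theorem sum_filter_lt_mul_eq_sum_Iio {ι R : Type*} [Fintype ι] [LinearOrder ι]
    [LocallyFiniteOrderBot ι] [NonUnitalNonAssocSemiring R] (a b : ι → R) :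
    ∑ p ∈ univ.filter (fun p : ι × ι => p.1 < p.2), a p.1 * b p.2
      = ∑ j, (∑ i ∈ Iio j, a i) * b j := by
  rw [sum_filter, Fintype.sum_prod_type_right]
  refine sum_congr rfl fun j _ => ?_
  rw [sum_mul, ← Finset.filter_gt_eq_Iio, sum_filter]

theorem Fin.forall_sum_Iio_eq_zero_iff {G : Type*} [AddCommGroup G] {n : ℕ} {a : Fin n → G}
    (hsum : ∑ i, a i = 0) : (∀ j, ∑ i ∈ Iio j, a i = 0) ↔ a = 0 := by
  refine ⟨fun h => funext fun j => ?_, fun ha j => by simp [ha]⟩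
  have hIic : ∑ i ∈ Iic j, a i = 0 := by
    by_cases hj : (j : ℕ) + 1 < n
    · rw [← h ⟨j + 1, hj⟩]
      congr 1
      ext i
      rw [mem_Iic, mem_Iio, Fin.le_def, Fin.lt_def]
      simp only
      omega
    · rw [← hsum]
      congr 1
      ext i
      simp only [mem_Iic, mem_univ, iff_true, Fin.le_def]
      omega
  rwa [← Iio_insert, sum_insert (by simp), h j, add_zero] at hIic

theorem AddChar.map_sum_eq_prod {ι A M : Type*} [AddCommMonoid A] [CommMonoid M]
    (ψ : AddChar A M) (s : Finset ι) (f : ι → A) : ψ (∑ i ∈ s, f i) = ∏ i ∈ s, ψ (f i) := by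
  classical
  induction s using Finset.induction_on with
  | empty => simp
  | insert a s ha ih => rw [sum_insert ha, prod_insert ha, map_add_eq_mul, ih]

theorem AddChar.sum_filter_sum_eq_apply_sum_mul {A R : Type*} [CommRing A] [Fintype A]
    [DecidableEq A] [CommRing R] [IsDomain R] {ψ : AddChar A R} (hψ : ψ.IsPrimitive) {m : ℕ}
    (c : Fin (m + 1) → A) (s : A) :
    ∑ k ∈ univ.filter (fun k : Fin (m + 1) → A => ∑ j, k j = s), ψ (∑ j, c j * k j)
      = if ∀ j, c j = c 0 then (Fintype.card A : R) ^ m * ψ (c 0 * s) else 0 := by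
  calc ∑ k ∈ univ.filter (fun k : Fin (m + 1) → A => ∑ j, k j = s), ψ (∑ j, c j * k j)
      = ∑ r : Fin m → A, ∑ x : A,
          if x = s - ∑ i, r i then ψ (c 0 * x + ∑ i, c i.succ * r i) else 0 := by
        rw [sum_filter, ← (Fin.consEquiv fun _ => A).sum_comp, Fintype.sum_prod_type, sum_comm]
        simp [Fin.sum_univ_succ, eq_sub_iff_add_eq]
    _ = ∑ r : Fin m → A, ψ (c 0 * s) * ∏ i, ψ (r i * (c i.succ - c 0)) := by
        refine sum_congr rfl fun r _ => ?_
        rw [sum_ite_eq', if_pos (mem_univ _), ← map_sum_eq_prod, ← map_add_eq_mul]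
        congr 1
        simp only [mul_sub, sub_mul, sum_sub_distrib, mul_sum, mul_comm (r _)]
        abel
    _ = ψ (c 0 * s) * ∏ i : Fin m, ∑ x, ψ (x * (c i.succ - c 0)) := by
        rw [← mul_sum, Fintype.prod_sum]
    _ = _ := by
        simp only [sum_mulShift _ hψ, sub_eq_zero, Nat.cast_ite, Nat.cast_zero,
          Fintype.prod_ite_zero, prod_const, card_univ, Fintype.card_fin, Fin.forall_fin_succ,
          true_and]
        split_ifs <;> ring

namespace ZMod

variable {d : ℕ} [NeZero d]

theorem zpow_eq_stdAddChar {q : ℂ} (hq : q = Complex.exp (2 * Real.pi * Complex.I / d))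
    (k : ℤ) : q ^ k = stdAddChar (k : ZMod d) := by
  rw [stdAddChar_coe, hq, ← Complex.exp_int_mul]
  ring_nf

theorem star_stdAddChar (x : ZMod d) : star (stdAddChar x) = stdAddChar (-x) := by
  rw [stdAddChar_apply, stdAddChar_apply, AddChar.map_neg_eq_inv, Circle.coe_inv_eq_conj]
  rfl

end ZMod

section SFT

variable {d n : ℕ} [NeZero d] {q ζ : ℂ}

theorem SFT_apply (hq : q = Complex.exp (2 * Real.pi * Complex.I / d))
    (l k : Fin n → ZMod d) :
    SFT d n q ζ l k = if ∑ j, l j = ∑ j, k j then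
      (Real.sqrt d : ℂ) ^ (1 - (n : ℤ)) * ζ ^ (∑ j, l j).val ^ 2 *
        ZMod.stdAddChar (-∑ j, (∑ i ∈ Iio j, l i) * k j)
      else 0 := by
  simp only [SFT, of_apply, prod_congr rfl fun _ _ => ZMod.zpow_eq_stdAddChar hq _,
    ← AddChar.map_sum_eq_prod]
  push_cast [ZMod.natCast_val, ZMod.cast_id]
  rw [sum_neg_distrib, sum_filter_lt_mul_eq_sum_Iio]

theorem SFT_mul_star_apply (hq : q = Complex.exp (2 * Real.pi * Complex.I / d))
    (hζ : ‖ζ‖ = 1) (l l' k : Fin n → ZMod d) :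
    SFT d n q ζ l k * star (SFT d n q ζ l' k)
      = if ∑ j, k j = ∑ j, l j ∧ ∑ j, l' j = ∑ j, l j then
          (d : ℂ) ^ (1 - (n : ℤ)) * ZMod.stdAddChar (∑ j, (∑ i ∈ Iio j, (l' i - l i)) * k j)
        else 0 := by
  have hsqrt : (Real.sqrt d : ℂ) ^ (1 - (n : ℤ)) * star ((Real.sqrt d : ℂ) ^ (1 - (n : ℤ)))
      = (d : ℂ) ^ (1 - (n : ℤ)) := by
    rw [star_zpow₀, Complex.star_def, Complex.conj_ofReal, ← mul_zpow, ← Complex.ofReal_mul,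
      Real.mul_self_sqrt (Nat.cast_nonneg d), Complex.ofReal_natCast]
  have hζpow (v : ℕ) : ζ ^ v * star (ζ ^ v) = 1 := by
    rw [Complex.star_def, Complex.mul_conj', norm_pow, hζ, one_pow, Complex.ofReal_one, one_pow]
  rw [SFT_apply hq, SFT_apply hq]
  by_cases hk : ∑ j, k j = ∑ j, l j
  · by_cases hk' : ∑ j, l' j = ∑ j, l j
    · rw [if_pos hk.symm, if_pos (hk'.trans hk.symm), if_pos ⟨hk, hk'⟩, hk', star_mul', star_mul',
        ZMod.star_stdAddChar, mul_mul_mul_comm, mul_mul_mul_comm _ (ζ ^ _), hsqrt, hζpow, mul_one,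
        ← AddChar.map_add_eq_mul]
      congr 2
      simp only [sub_mul, sum_sub_distrib, neg_neg]
      abel
    · rw [if_neg (show ¬∑ j, l' j = ∑ j, k j from fun h => hk' (h.trans hk)), star_zero,
        mul_zero, if_neg (fun h => hk' h.2)]
  · rw [if_neg (Ne.symm hk), zero_mul, if_neg (fun h => hk h.1)]

theorem SFT_mul_conjTranspose_self {m : ℕ} (hq : q = Complex.exp (2 * Real.pi * Complex.I / d))
    (hζ : ‖ζ‖ = 1) : SFT d (m + 1) q ζ * (SFT d (m + 1) q ζ)ᴴ = 1 := by
  ext l l'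
  rw [mul_apply, one_apply]
  simp only [conjTranspose_apply, SFT_mul_star_apply hq hζ]
  by_cases h : ∑ j, l' j = ∑ j, l j
  · have hpartial : (∀ j, ∑ i ∈ Iio j, (l' i - l i) = 0) ↔ l = l' := by
      rw [eq_comm, ← sub_eq_zero]
      exact Fin.forall_sum_Iio_eq_zero_iff (by simp [sum_sub_distrib, h])
    simp only [h, and_true]
    rw [← sum_filter, ← mul_sum,
      AddChar.sum_filter_sum_eq_apply_sum_mul (ZMod.isPrimitive_stdAddChar d)]
    have hc0 : ∑ i ∈ Iio (0 : Fin (m + 1)), (l' i - l i) = 0 := by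
      rw [← bot_eq_zero, Iio_bot, sum_empty]
    simp only [hc0, zero_mul, AddChar.map_zero_eq_one, mul_one, hpartial]
    split_ifs
    · rw [ZMod.card, ← zpow_natCast, ← zpow_add₀ (Nat.cast_ne_zero.mpr (NeZero.ne d)),
        show 1 - ((m + 1 : ℕ) : ℤ) + m = 0 by push_cast; ring, zpow_zero]
    · rw [mul_zero]
  · have hne : l ≠ l' := fun hll => h (hll ▸ rfl)
    simp [h, hne]

end SFT

theorem stmt_7_general (d n : ℕ) [NeZero d] (hn : 1 ≤ n) (q ζ : ℂ)
    (hq : q = Complex.exp (2 * Real.pi * Complex.I / d))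
    (hζd : ζ ^ d ^ 2 = 1) :
    SFT d n q ζ * (SFT d n q ζ)ᴴ = 1 ∧ (SFT d n q ζ)ᴴ * SFT d n q ζ = 1 := by
  obtain ⟨m, rfl⟩ := Nat.exists_eq_add_of_le' hn
  have hζ : ‖ζ‖ = 1 := Complex.norm_eq_one_of_pow_eq_one hζd (NeZero.ne _)
  have h : SFT d (m + 1) q ζ * (SFT d (m + 1) q ζ)ᴴ = 1 := SFT_mul_conjTranspose_self hq hζ
  exact ⟨h, mul_eq_one_comm.mp h⟩

/-- the string Fourier transform on `n`-qudits is unitary: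
`F_s · F_sᴴ = 1` and `F_sᴴ · F_s = 1`. -/
theorem stmt_7 (d n : ℕ) [NeZero d] (hn : 1 ≤ n) (q ζ : ℂ)
    (hq : q = Complex.exp (2 * Real.pi * Complex.I / d))
    (hζ2 : ζ ^ 2 = q) (hζd : ζ ^ d ^ 2 = 1) :
    SFT d n q ζ * (SFT d n q ζ)ᴴ = 1 ∧ (SFT d n q ζ)ᴴ * SFT d n q ζ = 1 :=
  stmt_7_general d n hn q ζ hq hζd
end

section
/- For every k ∈ ZMod d, the string Fourier transform of the neutral 2-qudit product state e_{(k,-k)} is the generalized Bell state: F_s e_{(k,-k)} = d^{-1/2} ∑_{ℓ ∈ ZMod d} q^{kℓ} e_{(ℓ,-ℓ)}. In particular, for k = 0, F_s e_{(0,0)} = d^{-1/2} ∑_ℓ e_{(ℓ,-ℓ)} = |Max⟩₂. -/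
/-- The string Fourier transform `F_s` on 2-qudits: its `((ℓ₁,ℓ₂),(k₁,k₂))` entry equals
`d^{-1/2} · ζ^{(ℓ₁+ℓ₂)²} · q^{-ℓ₁ k₂}` if `ℓ₁+ℓ₂ = k₁+k₂`, and `0` otherwise. -/
noncomputable def SFT2 (d : ℕ) (q ζ : ℂ) :
    Matrix (ZMod d × ZMod d) (ZMod d × ZMod d) ℂ :=
  Matrix.of fun l k =>
    if l.1 + l.2 = k.1 + k.2 then
      (Real.sqrt d : ℂ)⁻¹ * ζ ^ (l.1 + l.2).val ^ 2 *
        q ^ (-((l.1.val * k.2.val : ℕ) : ℤ))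
    else 0

/-- The product basis vector `e_{(k₁,k₂)}` of the 2-qudit space. -/
noncomputable def ket2 (d : ℕ) (k : ZMod d × ZMod d) : ZMod d × ZMod d → ℂ :=
  fun m => if m = k then 1 else 0

/-- for every `k ∈ ZMod d`,
`F_s e_{(k,-k)} = d^{-1/2} ∑_ℓ q^{kℓ} e_{(ℓ,-ℓ)}` (the generalized Bell state);
in particular `F_s e_{(0,0)} = d^{-1/2} ∑_ℓ e_{(ℓ,-ℓ)} = |Max⟩₂`. -/
theorem stmt_10 (d : ℕ) [NeZero d] (q ζ : ℂ)
    (hq : q = Complex.exp (2 * Real.pi * Complex.I / d))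
    (hζ2 : ζ ^ 2 = q) (hζd : ζ ^ d ^ 2 = 1) :
    (∀ k : ZMod d,
        (SFT2 d q ζ).mulVec (ket2 d (k, -k))
          = (Real.sqrt d : ℂ)⁻¹ • ∑ l : ZMod d, q ^ (k.val * l.val) • ket2 d (l, -l)) ∧
      (SFT2 d q ζ).mulVec (ket2 d (0, 0))
        = (Real.sqrt d : ℂ)⁻¹ • ∑ l : ZMod d, ket2 d (l, -l) := by
  have hqne : q ≠ 0 := by rw [hq]; exact Complex.exp_ne_zero _
  have hqd : q ^ d = 1 := by
    rw [hq, ← Complex.exp_nat_mul]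
    have hd : (d : ℂ) ≠ 0 := Nat.cast_ne_zero.mpr (NeZero.ne d)
    have h : (d : ℂ) * (2 * Real.pi * Complex.I / d) = 2 * Real.pi * Complex.I := by
      rw [mul_div_assoc']
      exact mul_div_cancel_left₀ _ hd
    rw [h, Complex.exp_two_pi_mul_I]
  have hexp : ∀ (k m : ZMod d),
      q ^ (-((m.val * (-k).val : ℕ) : ℤ)) = q ^ (k.val * m.val) := by
    intro k m
    have hdvd : d ∣ (-k).val + k.val := by
      have h0 : (((-k).val + k.val : ℕ) : ZMod d) = 0 := by
        push_cast [ZMod.natCast_val, ZMod.cast_id]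
        ring
      exact (ZMod.natCast_eq_zero_iff _ _).mp h0
    obtain ⟨t, ht⟩ := hdvd
    have h1 : q ^ (m.val * (-k).val) * q ^ (k.val * m.val) = 1 := by
      rw [← pow_add]
      have he : m.val * (-k).val + k.val * m.val = (d * t) * m.val := by
        rw [← ht]; ring
      rw [he, pow_mul, pow_mul, hqd, one_pow, one_pow]
    rw [zpow_neg, zpow_natCast]
    exact inv_eq_of_mul_eq_one_right h1
  have key : ∀ k : ZMod d,
      (SFT2 d q ζ).mulVec (ket2 d (k, -k))
        = (Real.sqrt d : ℂ)⁻¹ • ∑ l : ZMod d, q ^ (k.val * l.val) • ket2 d (l, -l) := by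
    intro k
    funext m
    obtain ⟨m1, m2⟩ := m
    have hL : (SFT2 d q ζ).mulVec (ket2 d (k, -k)) (m1, m2)
        = SFT2 d q ζ (m1, m2) (k, -k) := by
      simp only [Matrix.mulVec, dotProduct, ket2, mul_ite, mul_one, mul_zero]
      rw [Finset.sum_ite_eq' Finset.univ (k, -k) (fun j => SFT2 d q ζ (m1, m2) j)]
      simp
    rw [hL]
    have hR : ((Real.sqrt d : ℂ)⁻¹ • ∑ l : ZMod d, q ^ (k.val * l.val) • ket2 d (l, -l)) (m1, m2)
        = (Real.sqrt d : ℂ)⁻¹ * ∑ l : ZMod d, q ^ (k.val * l.val) * (if (m1, m2) = (l, -l) then 1 else 0) := by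
      simp [ket2, Finset.mul_sum]
    rw [hR]
    by_cases hm : m2 = -m1
    · subst hm
      have hsum : ∑ l : ZMod d, q ^ (k.val * l.val) * (if ((m1 : ZMod d), -m1) = (l, -l) then (1:ℂ) else 0)
          = q ^ (k.val * m1.val) := by
        rw [Finset.sum_eq_single m1]
        · simp
        · intro b _ hb
          simp [Prod.ext_iff, Ne.symm hb]
        · simp
      rw [hsum, SFT2]
      have hc : m1 + -m1 = k + -k := by ring
      simp only [Matrix.of_apply, hc, if_true]
      have h0 : (k + -k : ZMod d) = 0 := by ring
      rw [← hc] at h0 ⊢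
      rw [h0, ZMod.val_zero]
      simp only [ne_eq, OfNat.ofNat_ne_zero, not_false_eq_true, zero_pow, pow_zero, mul_one]
      rw [hexp k m1]
    · have hc : m1 + m2 ≠ k + -k := by
        intro h
        apply hm
        have : m1 + m2 = 0 := by rw [h]; ring
        linear_combination this
      have hsum : ∑ l : ZMod d, q ^ (k.val * l.val) * (if ((m1 : ZMod d), m2) = (l, -l) then (1:ℂ) else 0)
          = 0 := by
        apply Finset.sum_eq_zero
        intro b _
        have : ((m1 : ZMod d), m2) ≠ (b, -b) := by
          intro h
          obtain ⟨h1, h2⟩ := Prod.mk.injEq .. ▸ h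
          exact hm (by rw [h2, h1])
        simp [this]
      rw [hsum, SFT2]
      simp only [Matrix.of_apply, hc, if_false, mul_zero]
  refine ⟨key, ?_⟩
  have h00 : ((0 : ZMod d), (0 : ZMod d)) = (0, -0) := by norm_num
  rw [h00, key 0]
  congr 1
  apply Finset.sum_congr rfl
  intro l _
  rw [ZMod.val_zero]
  simp
end

section
/- The states |GHZ⟩ₙ and |Max⟩ₙ are Fourier duals of each other: (F ⊗ ⋯ ⊗ F) |Max⟩ₙ = |GHZ⟩ₙ and (F ⊗ ⋯ ⊗ F)⁻¹ |Max⟩ₙ = |GHZ⟩ₙ. -/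
/-- The 1-qudit Fourier matrix `F`, with `F e_k = d^{-1/2} ∑_ℓ q^{kℓ} e_ℓ`. -/
noncomputable def Fmat (d : ℕ) (q : ℂ) : Matrix (ZMod d) (ZMod d) ℂ :=
  Matrix.of fun l k => (Real.sqrt d : ℂ)⁻¹ * q ^ (k.val * l.val)

/-- The `n`-fold tensor (Kronecker) power `F ⊗ ⋯ ⊗ F` acting on the `n`-qudit space. -/
noncomputable def tensF (d n : ℕ) (q : ℂ) :
    Matrix (Fin n → ZMod d) (Fin n → ZMod d) ℂ :=
  Matrix.of fun l k => ∏ j, Fmat d q (l j) (k j)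

/-- The product basis vector `e_{\vec k}` of the `n`-qudit space. -/
noncomputable def ket (d n : ℕ) (k : Fin n → ZMod d) : (Fin n → ZMod d) → ℂ :=
  fun m => if m = k then 1 else 0

/-- The resource state `|Max⟩ₙ = d^{-(n-1)/2} ∑_{\vec ℓ : |\vec ℓ| = 0} e_{\vec ℓ}`. -/
noncomputable def MaxState (d n : ℕ) [NeZero d] : (Fin n → ZMod d) → ℂ :=
  (Real.sqrt d : ℂ) ^ (1 - (n : ℤ)) •
    ∑ l ∈ Finset.univ.filter (fun l : Fin n → ZMod d => ∑ j, l j = 0), ket d n l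

/-- The resource state `|GHZ⟩ₙ = d^{-1/2} ∑_{c ∈ ZMod d} e_{(c,c,…,c)}`. -/
noncomputable def GHZState (d n : ℕ) [NeZero d] : (Fin n → ZMod d) → ℂ :=
  (Real.sqrt d : ℂ)⁻¹ • ∑ c : ZMod d, ket d n (fun _ => c)

open Finset

/-!
Let `ψ a = ζ ^ a.val`, a primitive additive character of `ZMod d`. Up to scaling, `|Max⟩ₙ` is the
indicator of the kernel of the charge map `k ↦ ∑ j, k j`, and the Fourier transform of a subgroup
indicator is the indicator of its annihilator, here the diagonal `{(c, …, c)}`. Concretely,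
orthogonality `d • [∑ j, k j = 0] = ∑ c, ψ (c * ∑ j, k j)` turns the sum over the kernel into a
sum over `c` of full character sums, each of which factors over the qudits.
The inverse of `F ⊗ ⋯ ⊗ F` is the same matrix built from `ζ⁻¹`, again a primitive root, so the
second identity is the first one for `ζ⁻¹`.
-/

namespace AddChar

lemma map_sum_eq_prod_s11 {A M ι : Type*} [AddCommMonoid A] [CommMonoid M] (ψ : AddChar A M)
    (s : Finset ι) (f : ι → A) : ψ (∑ i ∈ s, f i) = ∏ i ∈ s, ψ (f i) := by
  classical
  induction s using Finset.induction_on with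
  | empty => simp
  | insert a s ha ih => rw [sum_insert ha, prod_insert ha, map_add_eq_mul, ih]

variable {R R' ι : Type*} [CommRing R] [Fintype R] [DecidableEq R] [CommRing R'] [IsDomain R']
  [Fintype ι] [DecidableEq ι] {ψ : AddChar R R'}

lemma sum_pi_map_sum_mul (hψ : ψ.IsPrimitive) (m : ι → R) :
    ∑ k : ι → R, ψ (∑ j, k j * m j) = if m = 0 then (Fintype.card R : R') ^ Fintype.card ι
      else 0 := by
  simp only [map_sum_eq_prod_s11]
  rw [← Fintype.prod_sum (fun j x => ψ (x * m j))]
  simp only [sum_mulShift _ hψ, Nat.cast_ite, Nat.cast_zero, Fintype.prod_ite_zero, prod_const,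
    card_univ, funext_iff, Pi.zero_apply]

lemma card_mul_sum_filter_sum_eq_zero (hψ : ψ.IsPrimitive) (l : ι → R) :
    (Fintype.card R : R') * ∑ k ∈ univ.filter (fun k : ι → R => ∑ j, k j = 0),
        ψ (∑ j, k j * l j)
      = (Fintype.card R : R') ^ Fintype.card ι * ∑ a : R, if l = (fun _ => a) then 1 else 0 := by
  have orthogonality : ∀ k : ι → R, (if ∑ j, k j = 0 then (Fintype.card R : R') else 0)
      = ∑ c : R, ψ (c * ∑ j, k j) := fun k => by rw [sum_mulShift _ hψ]; push_cast; rfl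
  have shift : ∀ (k : ι → R) (c : R), ψ (c * ∑ j, k j) * ψ (∑ j, k j * l j)
      = ψ (∑ j, k j * (l j + c)) := fun k c => by
    rw [← map_add_eq_mul, mul_sum, ← sum_add_distrib]
    exact congrArg ψ (sum_congr rfl fun j _ => by ring)
  calc (Fintype.card R : R') * ∑ k ∈ univ.filter (fun k : ι → R => ∑ j, k j = 0),
        ψ (∑ j, k j * l j)
      = ∑ k : ι → R, (if ∑ j, k j = 0 then (Fintype.card R : R') else 0) * ψ (∑ j, k j * l j) := by
        rw [sum_filter, mul_sum]
        exact sum_congr rfl fun k _ => by split_ifs <;> simp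
    _ = ∑ c : R, ∑ k : ι → R, ψ (∑ j, k j * (l j + c)) := by
        simp only [orthogonality, sum_mul, shift]
        exact sum_comm
    _ = ∑ c : R, if l = (fun _ => -c) then (Fintype.card R : R') ^ Fintype.card ι else 0 := by
        refine sum_congr rfl fun c _ => ?_
        rw [sum_pi_map_sum_mul hψ]
        simp only [funext_iff, Pi.zero_apply, add_eq_zero_iff_eq_neg]
    _ = _ := by
        rw [mul_sum]
        exact Fintype.sum_equiv (Equiv.neg R) _ _ fun c => by simp

end AddChar

section Qudit

open AddChar Matrix

variable {d n : ℕ} [NeZero d] {ζ : ℂ}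

lemma Fmat_apply_eq_zmodChar (hζ : ζ ^ d = 1) (l k : ZMod d) :
    Fmat d ζ l k = (Real.sqrt d : ℂ)⁻¹ * zmodChar d hζ (k * l) := by
  rw [Fmat, of_apply, zmodChar_apply, ZMod.val_mul, ← pow_eq_pow_mod _ hζ]

lemma tensF_apply_eq_zmodChar (hζ : ζ ^ d = 1) (l k : Fin n → ZMod d) :
    tensF d n ζ l k = (Real.sqrt d : ℂ)⁻¹ ^ n * zmodChar d hζ (∑ j, k j * l j) := by
  simp only [tensF, of_apply, Fmat_apply_eq_zmodChar hζ, prod_mul_distrib, prod_const,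
    card_univ, Fintype.card_fin, map_sum_eq_prod_s11]

lemma MaxState_apply (k : Fin n → ZMod d) :
    MaxState d n k = (Real.sqrt d : ℂ) ^ (1 - (n : ℤ)) * if ∑ j, k j = 0 then 1 else 0 := by
  simp [MaxState, ket]

lemma GHZState_apply (l : Fin n → ZMod d) :
    GHZState d n l = (Real.sqrt d : ℂ)⁻¹ * ∑ a : ZMod d, if l = (fun _ => a) then 1 else 0 := by
  simp [GHZState, ket]

lemma sqrt_natCast_mul_self (d : ℕ) : (Real.sqrt d : ℂ) * Real.sqrt d = d := by
  rw [← Complex.ofReal_mul, Real.mul_self_sqrt (Nat.cast_nonneg d), Complex.ofReal_natCast]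

lemma sqrt_natCast_ne_zero (d : ℕ) [NeZero d] : (Real.sqrt d : ℂ) ≠ 0 :=
  Complex.ofReal_ne_zero.mpr (Real.sqrt_ne_zero'.mpr (Nat.cast_pos.mpr (NeZero.pos d)))

lemma tensF_mulVec_MaxState (hζ : IsPrimitiveRoot ζ d) :
    tensF d n ζ *ᵥ MaxState d n = GHZState d n := by
  set c : ℂ := (Real.sqrt d : ℂ)
  have hc : c * c = d := sqrt_natCast_mul_self d
  have hc0 : c ≠ 0 := sqrt_natCast_ne_zero d
  funext l
  have hsum := card_mul_sum_filter_sum_eq_zero (zmodChar_primitive_of_primitive_root d hζ) l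
  rw [ZMod.card, Fintype.card_fin] at hsum
  have hscale : c⁻¹ ^ n * c ^ (1 - (n : ℤ)) * (d : ℂ) ^ n = c⁻¹ * d := by
    rw [← hc, zpow_sub₀ hc0, zpow_one, zpow_natCast, mul_pow, inv_pow]
    field_simp
  apply mul_left_cancel₀ (NeZero.ne (d : ℂ))
  calc (d : ℂ) * (tensF d n ζ *ᵥ MaxState d n) l
      = c⁻¹ ^ n * c ^ (1 - (n : ℤ)) * ((d : ℂ) *
          ∑ k ∈ univ.filter (fun k : Fin n → ZMod d => ∑ j, k j = 0),
            zmodChar d hζ.pow_eq_one (∑ j, k j * l j)) := by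
        simp only [mulVec, dotProduct, tensF_apply_eq_zmodChar hζ.pow_eq_one, MaxState_apply,
          sum_filter, mul_sum]
        refine sum_congr rfl fun k _ => ?_
        split_ifs <;> ring
    _ = d * GHZState d n l := by
        rw [hsum, GHZState_apply]
        linear_combination (∑ a : ZMod d, if l = (fun _ => a) then (1 : ℂ) else 0) * hscale

lemma zmodChar_inv_apply (hζ : ζ ^ d = 1) (a : ZMod d) :
    zmodChar d (by rw [inv_pow, hζ, inv_one] : ζ⁻¹ ^ d = 1) a = zmodChar d hζ (-a) := by
  rw [map_neg_eq_inv, zmodChar_apply, zmodChar_apply, inv_pow]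

lemma tensF_mul_tensF_inv (hζ : IsPrimitiveRoot ζ d) :
    tensF d n ζ * tensF d n ζ⁻¹ = 1 := by
  set c : ℂ := (Real.sqrt d : ℂ)
  set ψ := zmodChar d hζ.pow_eq_one
  have hc : c * c = d := sqrt_natCast_mul_self d
  ext l m
  calc (tensF d n ζ * tensF d n ζ⁻¹) l m
      = (c⁻¹ * c⁻¹) ^ n * ∑ k : Fin n → ZMod d, ψ (∑ j, k j * (l j - m j)) := by
        simp only [Matrix.mul_apply, tensF_apply_eq_zmodChar hζ.pow_eq_one,
          tensF_apply_eq_zmodChar hζ.inv.pow_eq_one, zmodChar_inv_apply hζ.pow_eq_one, mul_sum]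
        refine sum_congr rfl fun k _ => ?_
        rw [mul_mul_mul_comm, ← map_add_eq_mul, ← mul_pow, ← sum_neg_distrib, ← sum_add_distrib]
        exact congrArg _ (congrArg ψ (sum_congr rfl fun j _ => by ring))
    _ = (1 : Matrix (Fin n → ZMod d) (Fin n → ZMod d) ℂ) l m := by
        rw [sum_pi_map_sum_mul (zmodChar_primitive_of_primitive_root d hζ), Matrix.one_apply,
          ZMod.card, Fintype.card_fin]
        have hlm : (fun j => l j - m j) = 0 ↔ l = m := by
          simp only [funext_iff, Pi.zero_apply, sub_eq_zero]
        simp only [hlm]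
        split_ifs
        · rw [← mul_pow, ← mul_inv, hc, inv_mul_cancel₀ (NeZero.ne (d : ℂ)), one_pow]
        · rw [mul_zero]

lemma inv_tensF (hζ : IsPrimitiveRoot ζ d) : (tensF d n ζ)⁻¹ = tensF d n ζ⁻¹ :=
  inv_eq_right_inv (tensF_mul_tensF_inv hζ)

end Qudit

theorem stmt_11_general (d n : ℕ) [NeZero d] (q : ℂ)
    (hq : q = Complex.exp (2 * Real.pi * Complex.I / d)) :
    (tensF d n q).mulVec (MaxState d n) = GHZState d n ∧
    (tensF d n q)⁻¹.mulVec (MaxState d n) = GHZState d n := by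
  have hprim : IsPrimitiveRoot q d := hq ▸ Complex.isPrimitiveRoot_exp d (NeZero.ne d)
  refine ⟨tensF_mulVec_MaxState hprim, ?_⟩
  rw [inv_tensF hprim]
  exact tensF_mulVec_MaxState hprim.inv

/-- `|GHZ⟩ₙ` and `|Max⟩ₙ` are Fourier duals of each other:
`(F ⊗ ⋯ ⊗ F) |Max⟩ₙ = |GHZ⟩ₙ` and `(F ⊗ ⋯ ⊗ F)⁻¹ |Max⟩ₙ = |GHZ⟩ₙ`. -/
theorem stmt_11 (d n : ℕ) [NeZero d] (hn : 1 ≤ n) (q : ℂ)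
    (hq : q = Complex.exp (2 * Real.pi * Complex.I / d)) :
    (tensF d n q).mulVec (MaxState d n) = GHZState d n ∧
    (tensF d n q)⁻¹.mulVec (MaxState d n) = GHZState d n :=
  stmt_11_general d n q hq
end

section
/- For every \vec k : Fin n → ZMod d, the string Fourier transform of the product state e_{\vec k} is the entangled resource state |Max_{\vec k}⟩ = F_s e_{\vec k} = ζ^{-|\vec k|²} · d^{-(n-1)/2} · ∑_{\vec ℓ : |\vec ℓ| = |\vec k|} q^{k₁ℓ₁ + (k₁+k₂)ℓ₂ + ⋯ + (k₁+⋯+kₙ)ℓₙ} e_{\vec ℓ}. -/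
lemma zpow_congr_mod (d : ℕ) [NeZero d] (q : ℂ) (hq0 : q ≠ 0) (hqd : q ^ (d:ℤ) = 1)
    (a b : ℤ) (h : ((a : ZMod d) = (b : ZMod d))) : q ^ a = q ^ b := by
  rw [ZMod.intCast_eq_intCast_iff] at h
  obtain ⟨t, ht⟩ := h.dvd
  have : b = a + d * t := by linarith
  rw [this, zpow_add₀ hq0, zpow_mul, hqd, one_zpow, mul_one]

lemma zmod_key (d n : ℕ) (k l : Fin n → ZMod d) (h : ∑ j, l j = ∑ j, k j) :
    ∑ j, (∑ i ∈ Finset.Iic j, k i) * l j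
      = (∑ j, k j) * (∑ j, k j)
        - ∑ p ∈ Finset.univ.filter (fun p : Fin n × Fin n => p.1 < p.2), l p.1 * k p.2 := by
  have h1 : ∑ j, (∑ i ∈ Finset.Iic j, k i) * l j
      = ∑ p ∈ Finset.univ.filter (fun p : Fin n × Fin n => p.1 ≤ p.2), k p.1 * l p.2 := by
    rw [Finset.sum_filter, Fintype.sum_prod_type, Finset.sum_comm]
    refine Finset.sum_congr rfl fun j _ => ?_
    rw [Finset.sum_mul, ← Finset.sum_filter]
    refine Finset.sum_congr ?_ fun i _ => rfl
    ext i; simp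
  have h2 : ∑ p ∈ Finset.univ.filter (fun p : Fin n × Fin n => p.1 < p.2), l p.1 * k p.2
      = ∑ p ∈ Finset.univ.filter (fun p : Fin n × Fin n => ¬ p.1 ≤ p.2), k p.1 * l p.2 := by
    refine Finset.sum_nbij' (fun p => p.swap) (fun p => p.swap)
      (fun p hp => ?_) (fun p hp => ?_) (fun p _ => Prod.swap_swap p)
      (fun p _ => Prod.swap_swap p) (fun p hp => (mul_comm _ _))
    · simp only [Finset.mem_filter, Finset.mem_univ, true_and, not_le, Prod.fst_swap,
        Prod.snd_swap] at hp ⊢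
      exact hp
    · simp only [Finset.mem_filter, Finset.mem_univ, true_and, not_le, Prod.fst_swap,
        Prod.snd_swap] at hp ⊢
      exact hp
  have h3 : (∑ p ∈ Finset.univ.filter (fun p : Fin n × Fin n => p.1 ≤ p.2), k p.1 * l p.2)
      + ∑ p ∈ Finset.univ.filter (fun p : Fin n × Fin n => ¬ p.1 ≤ p.2), k p.1 * l p.2
      = (∑ j, k j) * (∑ j, l j) := by
    rw [Finset.sum_filter_add_sum_filter_not, Finset.sum_mul_sum]
    rw [Fintype.sum_prod_type]
  rw [h1, h2]
  rw [← h] at h3 ⊢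
  linear_combination h3



/-- for every `\vec k`, the SFT of the product state `e_{\vec k}` is the
entangled resource state `|Max_{\vec k}⟩ = F_s e_{\vec k} = ζ^{-|\vec k|²} d^{-(n-1)/2}
∑_{\vec ℓ : |\vec ℓ| = |\vec k|} q^{k₁ℓ₁ + (k₁+k₂)ℓ₂ + ⋯ + (k₁+⋯+kₙ)ℓₙ} e_{\vec ℓ}`. -/
theorem stmt_12 (d n : ℕ) [NeZero d] (hn : 1 ≤ n) (q ζ : ℂ)
    (hq : q = Complex.exp (2 * Real.pi * Complex.I / d))
    (hζ2 : ζ ^ 2 = q) (hζd : ζ ^ d ^ 2 = 1) (k : Fin n → ZMod d) :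
    (SFT d n q ζ).mulVec (ket d n k)
      = ζ ^ (-(((∑ j, k j).val ^ 2 : ℕ) : ℤ)) •
          (Real.sqrt d : ℂ) ^ (1 - (n : ℤ)) •
            ∑ l ∈ Finset.univ.filter
                (fun l : Fin n → ZMod d => ∑ j, l j = ∑ j, k j),
              q ^ (∑ j, (∑ i ∈ Finset.Iic j, k i).val * (l j).val) • ket d n l := by
  have hd0 : (d : ℂ) ≠ 0 := Nat.cast_ne_zero.mpr (NeZero.ne d)
  have hq0 : q ≠ 0 := by rw [hq]; exact Complex.exp_ne_zero _
  have hζ0 : ζ ≠ 0 := by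
    intro h; rw [h] at hζ2; rw [← hζ2] at hq0; simp at hq0
  have hqd : q ^ (d:ℤ) = 1 := by
    rw [hq, zpow_natCast, ← Complex.exp_nat_mul]
    rw [show (d:ℂ) * (2 * Real.pi * Complex.I / d) = 2 * Real.pi * Complex.I by
      field_simp]
    exact Complex.exp_two_pi_mul_I
  funext l
  have hL : (SFT d n q ζ).mulVec (ket d n k) l = SFT d n q ζ l k := by
    simp [Matrix.mulVec, dotProduct, ket, mul_ite, mul_one, mul_zero]
  rw [hL]
  rw [Pi.smul_apply, Pi.smul_apply, Finset.sum_apply]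
  simp only [Pi.smul_apply, ket, smul_eq_mul, mul_ite, mul_one, mul_zero]
  rw [Finset.sum_ite_eq]
  simp only [Finset.mem_filter, Finset.mem_univ, true_and]
  show (if (∑ j, l j) = (∑ j, k j) then _ else (0:ℂ)) = _
  by_cases hS : (∑ j, l j) = (∑ j, k j)
  · rw [if_pos hS, if_pos hS]
    set A : ℕ := (∑ j, k j).val ^ 2 with hA
    set E : ℕ := ∑ j, (∑ i ∈ Finset.Iic j, k i).val * (l j).val with hE
    set P : ℕ := ∑ p ∈ Finset.univ.filter (fun p : Fin n × Fin n => p.1 < p.2),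
      (l p.1).val * (k p.2).val with hP
    have hprod : (∏ p ∈ Finset.univ.filter (fun p : Fin n × Fin n => p.1 < p.2),
        q ^ (-(((l p.1).val * (k p.2).val : ℕ) : ℤ))) = q ^ (-(P:ℤ)) := by
      rw [hP, zpow_neg, zpow_natCast, ← inv_pow, ← Finset.prod_pow_eq_pow_sum]
      refine Finset.prod_congr rfl fun p _ => ?_
      rw [zpow_neg, zpow_natCast, inv_pow]
    have hcong : q ^ ((A:ℤ) - P) = q ^ (E:ℤ) := by
      refine zpow_congr_mod d q hq0 hqd _ _ ?_
      rw [hA, hE, hP]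
      push_cast
      simp only [ZMod.natCast_val, ZMod.cast_id', ZMod.cast_id, id_eq]
      rw [sq]
      linear_combination -(zmod_key d n k l hS)
    have hz : ζ ^ (-(A:ℤ)) * q ^ (A:ℤ) = ζ ^ A := by
      rw [← hζ2, ← zpow_natCast ζ 2, ← zpow_mul, ← zpow_add₀ hζ0, ← zpow_natCast ζ A]
      congr 1
      push_cast
      ring
    have hmain : ζ ^ A * q ^ (-(P:ℤ)) = ζ ^ (-(A:ℤ)) * q ^ E :=
      calc ζ ^ A * q ^ (-(P:ℤ))
          = ζ ^ (-(A:ℤ)) * (q ^ (A:ℤ) * q ^ (-(P:ℤ))) := by rw [← hz]; ring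
        _ = ζ ^ (-(A:ℤ)) * q ^ ((A:ℤ) - P) := by rw [← zpow_add₀ hq0]; ring_nf
        _ = ζ ^ (-(A:ℤ)) * q ^ (E:ℤ) := by rw [hcong]
        _ = ζ ^ (-(A:ℤ)) * q ^ E := by rw [zpow_natCast]
    show (Real.sqrt d : ℂ) ^ (1 - (n : ℤ)) * ζ ^ (∑ j, l j).val ^ 2 * _ = _
    rw [hS, hprod]
    calc (Real.sqrt d : ℂ) ^ (1 - (n : ℤ)) * ζ ^ A * q ^ (-(P:ℤ))
        = (Real.sqrt d : ℂ) ^ (1 - (n : ℤ)) * (ζ ^ A * q ^ (-(P:ℤ))) := by ring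
      _ = (Real.sqrt d : ℂ) ^ (1 - (n : ℤ)) * (ζ ^ (-(A:ℤ)) * q ^ E) := by rw [hmain]
      _ = ζ ^ (-(A:ℤ)) * ((Real.sqrt d : ℂ) ^ (1 - (n : ℤ)) * q ^ E) := by ring
  · rw [if_neg hS, if_neg hS, mul_zero, mul_zero]
end

section
/- The SFT of a neutral product state is maximally entangled at every site: let n ≥ 2, let \vec k : Fin n → ZMod d satisfy |\vec k| = 0, and let ψ = F_s e_{\vec k}. For each site j ∈ Fin n, the single-site reduced density matrix ρ_j (the partial trace of |ψ⟩⟨ψ| over all sites other than j), given by ρ_j(a,b) = ∑_{\vec m : Fin n → ZMod d, m_j = a} ψ(\vec m) · conj(ψ(Function.update \vec m j b)), equals d⁻¹ times the d×d identity matrix. In particular the entanglement entropy of ψ at every single site equals ln d, the maximal value. -/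
/-- The single-site reduced density matrix at site `j` of the state `ψ = F_s e_{\vec k}`:
`ρ_j(a,b) = ∑_{\vec m : m_j = a} ψ(\vec m) · conj(ψ(update \vec m j b))`. -/
noncomputable def rho (d n : ℕ) [NeZero d] (q ζ : ℂ) (k : Fin n → ZMod d) (j : Fin n) :
    Matrix (ZMod d) (ZMod d) ℂ :=
  Matrix.of fun a b =>
    ∑ m ∈ Finset.univ.filter (fun m : Fin n → ZMod d => m j = a),
      (SFT d n q ζ).mulVec (ket d n k) m *
        (starRingEnd ℂ) ((SFT d n q ζ).mulVec (ket d n k) (Function.update m j b))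

/-! Since `|k| = 0`, the amplitude `ψ(m) = F_s(m, k)` vanishes unless `|m| = 0`; there the factor
`ζ^{|m|²}` is `1` and every power of `q` is a phase, so `|ψ(m)|² = d^{1-n}`. An off-diagonal
entry of `ρ_j` pairs `m` with `update m j b`, whose charges differ, so it vanishes. A diagonal
entry counts the neutral strings with `m_j = a`: a fibre of the surjective homomorphism
`m ↦ (m_j, |m|)` from `(ZMod d)ⁿ` onto `(ZMod d)²`, hence of size `d^{n-2}`. -/

open Finset

theorem card_filter_apply_eq_and_sum_eq {G : Type*} [AddCommGroup G] [Fintype G]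
    [DecidableEq G] {n : ℕ} (hn : 2 ≤ n) (j : Fin n) (a c : G) :
    #{m : Fin n → G | m j = a ∧ ∑ i, m i = c} = Fintype.card G ^ (n - 2) := by
  let f : (Fin n → G) →+ G × G :=
    AddMonoidHom.mk' (fun m => (m j, ∑ i, m i)) fun _ _ => by simp [sum_add_distrib]
  have hsurj : Function.Surjective f := by
    obtain ⟨j', hj'⟩ : ∃ j', j' ≠ j :=
      Fintype.exists_ne_of_one_lt_card (by simp; omega) j
    rintro ⟨a, c⟩
    refine ⟨Pi.single j a + Pi.single j' (c - a), ?_⟩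
    simp [f, sum_add_distrib, hj']
  have hfiber : ∀ y, #{m | f m = y} = #{m | f m = 0} := fun y =>
    AddMonoidHom.card_fiber_eq_of_mem_range f (hsurj y) (hsurj 0)
  have htotal : Fintype.card G ^ 2 * Fintype.card G ^ (n - 2)
      = Fintype.card G ^ 2 * #{m | f m = 0} := by
    rw [← pow_add, Nat.add_sub_cancel' hn]
    calc Fintype.card G ^ n = #(univ : Finset (Fin n → G)) := by simp
      _ = ∑ y : G × G, #{m | f m = y} := card_eq_sum_card_fiberwise fun _ _ => mem_univ _
      _ = _ := by simp [hfiber, sq]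
  have := Nat.eq_of_mul_eq_mul_left (by positivity) htotal
  simpa [this, f, Prod.ext_iff] using hfiber (a, c)

theorem Fintype.sum_update_eq_sum_add_sub {ι G : Type*} [Fintype ι] [DecidableEq ι]
    [AddCommGroup G] (m : ι → G) (j : ι) (b : G) :
    ∑ i, Function.update m j b i = ∑ i, m i + (b - m j) := by
  rw [sum_update_of_mem (mem_univ j), ← add_sum_erase univ m (mem_univ j),
    sdiff_singleton_eq_erase]
  abel

section SFT

variable {d n : ℕ} {q ζ : ℂ}

theorem SFT_mulVec_ket [NeZero d] (k : Fin n → ZMod d) :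
    (SFT d n q ζ).mulVec (ket d n k) = fun l => SFT d n q ζ l k := by
  have : ket d n k = Pi.single k 1 := by ext m; simp [ket, Pi.single_apply]
  rw [this, Matrix.mulVec_single_one]
  rfl

theorem SFT_apply_of_sum_ne {l k : Fin n → ZMod d} (h : ∑ i, l i ≠ ∑ i, k i) :
    SFT d n q ζ l k = 0 := if_neg h

theorem normSq_SFT_apply_of_sum_eq_zero (hq : ‖q‖ = 1) {l k : Fin n → ZMod d}
    (hl : ∑ i, l i = 0) (hk : ∑ i, k i = 0) :
    Complex.normSq (SFT d n q ζ l k) = (d : ℝ) ^ (1 - (n : ℤ)) := by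
  have hq' : Complex.normSq q = 1 := by rw [Complex.normSq_eq_norm_sq, hq, one_pow]
  rw [SFT, Matrix.of_apply, if_pos (hl.trans hk.symm), hl, ZMod.val_zero]
  simp [map_prod, map_zpow₀, hq', Complex.normSq_ofReal]

theorem SFT_apply_mul_conj_self [NeZero d] (hq : ‖q‖ = 1) {k : Fin n → ZMod d}
    (hk : ∑ i, k i = 0) (l : Fin n → ZMod d) :
    SFT d n q ζ l k * starRingEnd ℂ (SFT d n q ζ l k)
      = if ∑ i, l i = 0 then ((d : ℂ) ^ (1 - (n : ℤ))) else 0 := by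
  split_ifs with hl
  · rw [Complex.mul_conj, normSq_SFT_apply_of_sum_eq_zero hq hl hk, Complex.ofReal_zpow,
      Complex.ofReal_natCast]
  · rw [SFT_apply_of_sum_ne (by rwa [hk]), zero_mul]

end SFT

theorem rho_eq_smul_one {d n : ℕ} [NeZero d] (hn : 2 ≤ n) {q : ℂ} (hq : ‖q‖ = 1) (ζ : ℂ)
    {k : Fin n → ZMod d} (hk : ∑ i, k i = 0) (j : Fin n) :
    rho d n q ζ k j = (d : ℂ)⁻¹ • (1 : Matrix (ZMod d) (ZMod d) ℂ) := by
  ext a b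
  simp only [rho, Matrix.of_apply, SFT_mulVec_ket, Matrix.smul_apply, Matrix.one_apply,
    smul_eq_mul]
  rcases eq_or_ne a b with rfl | hab
  · have hupdate : ∀ m ∈ ({m | m j = a} : Finset (Fin n → ZMod d)), Function.update m j a = m :=
      fun m hm => (mem_filter.1 hm).2 ▸ Function.update_eq_self j m
    rw [sum_congr rfl fun m hm => by rw [hupdate m hm, SFT_apply_mul_conj_self hq hk],
      ← sum_filter, filter_filter, sum_const, card_filter_apply_eq_and_sum_eq hn, ZMod.card,
      nsmul_eq_mul, if_pos rfl, mul_one]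
    have hd : (d : ℂ) ≠ 0 := NeZero.ne _
    push_cast
    rw [← zpow_natCast, ← zpow_add₀ hd, Nat.cast_sub hn, ← zpow_neg_one]
    congr 1
    push_cast
    ring
  · rw [if_neg hab, mul_zero]
    refine sum_eq_zero fun m hm => ?_
    by_cases hm0 : ∑ i, m i = 0
    · have : ∑ i, Function.update m j b i ≠ ∑ i, k i := by
        rw [Fintype.sum_update_eq_sum_add_sub, hm0, (mem_filter.1 hm).2, hk, zero_add,
          sub_ne_zero]
        exact hab.symm
      rw [SFT_apply_of_sum_ne this, map_zero, mul_zero]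
    · rw [SFT_apply_of_sum_ne (by rwa [hk]), zero_mul]

theorem stmt_14_general (d n : ℕ) [NeZero d] (hn : 2 ≤ n) (q ζ : ℂ)
    (hq : q = Complex.exp (2 * Real.pi * Complex.I / d))
    (k : Fin n → ZMod d) (hk : ∑ j, k j = 0) (j : Fin n) :
    rho d n q ζ k j = (d : ℂ)⁻¹ • (1 : Matrix (ZMod d) (ZMod d) ℂ) ∧
    -∑ a : ZMod d, (rho d n q ζ k j a a).re * Real.log (rho d n q ζ k j a a).re
      = Real.log d := by
  have hq1 : ‖q‖ = 1 := by
    rw [hq, mul_div_right_comm, ← Complex.ofReal_natCast, ← Complex.ofReal_ofNat,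
      ← Complex.ofReal_mul, ← Complex.ofReal_div, Complex.norm_exp_ofReal_mul_I]
  have hρ := rho_eq_smul_one hn hq1 ζ hk j
  refine ⟨hρ, ?_⟩
  have hd : (d : ℝ) ≠ 0 := NeZero.ne _
  simp [hρ, ZMod.card, Real.log_inv, hd]

/-- the SFT of a neutral product state is maximally entangled at every site:
if `n ≥ 2` and `|\vec k| = 0`, then for each site `j` the single-site reduced density matrix
of `ψ = F_s e_{\vec k}` equals `d⁻¹` times the identity; in particular the entanglement
entropy of `ψ` at every single site equals `ln d`, the maximal value. -/
theorem stmt_14 (d n : ℕ) [NeZero d] (hn : 2 ≤ n) (q ζ : ℂ)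
    (hq : q = Complex.exp (2 * Real.pi * Complex.I / d))
    (hζ2 : ζ ^ 2 = q) (hζd : ζ ^ d ^ 2 = 1)
    (k : Fin n → ZMod d) (hk : ∑ j, k j = 0) (j : Fin n) :
    rho d n q ζ k j = (d : ℂ)⁻¹ • (1 : Matrix (ZMod d) (ZMod d) ℂ) ∧
    -∑ a : ZMod d, (rho d n q ζ k j a a).re * Real.log (rho d n q ζ k j a a).re
      = Real.log d :=
  stmt_14_general d n hn q ζ hq k hk j
end

section
/- The string Fourier transform on 2-qudits factors through the Fourier matrix, the Gaussian, and controlled-X gates in two ways: F_s = (G⁻¹ ⊗ G) · C_{1,X}⁻¹ · (F ⊗ 1) · C_{1,X} and F_s = C_{X,1}⁻¹ · (1 ⊗ F) · C_{X,1} · (G ⊗ G⁻¹). -/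
open Kronecker

/-- The Gaussian matrix `G`, with `G e_k = ζ^{k²} e_k`. -/
noncomputable def Gmat (d : ℕ) (ζ : ℂ) : Matrix (ZMod d) (ZMod d) ℂ :=
  Matrix.of fun j k => if j = k then ζ ^ k.val ^ 2 else 0

/-- The controlled-X gate with first qudit as control: `C_{1,X} e_{(k₁,k₂)} = e_{(k₁,k₂+k₁)}`. -/
noncomputable def C1X (d : ℕ) : Matrix (ZMod d × ZMod d) (ZMod d × ZMod d) ℂ :=
  Matrix.of fun j k => if j = (k.1, k.2 + k.1) then 1 else 0

/-- The controlled-X gate with second qudit as control: `C_{X,1} e_{(k₁,k₂)} = e_{(k₁+k₂,k₂)}`. -/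
noncomputable def CX1 (d : ℕ) : Matrix (ZMod d × ZMod d) (ZMod d × ZMod d) ℂ :=
  Matrix.of fun j k => if j = (k.1 + k.2, k.2) then 1 else 0

noncomputable def Ginv (d : ℕ) (ζ : ℂ) : Matrix (ZMod d) (ZMod d) ℂ :=
  Matrix.of fun j k => if j = k then (ζ ^ k.val ^ 2)⁻¹ else 0

noncomputable def C1Xinv (d : ℕ) : Matrix (ZMod d × ZMod d) (ZMod d × ZMod d) ℂ :=
  Matrix.of fun j k => if j = (k.1, k.2 - k.1) then 1 else 0

noncomputable def CX1inv (d : ℕ) : Matrix (ZMod d × ZMod d) (ZMod d × ZMod d) ℂ :=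
  Matrix.of fun j k => if j = (k.1 - k.2, k.2) then 1 else 0

lemma C1X_inv (d : ℕ) [NeZero d] : (C1X d)⁻¹ = C1Xinv d := by
  apply Matrix.inv_eq_right_inv
  ext ⟨j1, j2⟩ ⟨k1, k2⟩
  simp [Matrix.mul_apply, C1X, C1Xinv, Fintype.sum_prod_type, Prod.ext_iff,
    Matrix.one_apply, ite_and]

lemma CX1_inv (d : ℕ) [NeZero d] : (CX1 d)⁻¹ = CX1inv d := by
  apply Matrix.inv_eq_right_inv
  ext ⟨j1, j2⟩ ⟨k1, k2⟩
  simp [Matrix.mul_apply, CX1, CX1inv, Fintype.sum_prod_type, Prod.ext_iff,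
    Matrix.one_apply, ite_and]

lemma Gmat_inv (d : ℕ) [NeZero d] (ζ : ℂ) (hζ : ζ ≠ 0) : (Gmat d ζ)⁻¹ = Ginv d ζ := by
  apply Matrix.inv_eq_right_inv
  ext j k
  simp [Matrix.mul_apply, Gmat, Ginv, Matrix.one_apply, ite_and]
  split <;> simp_all

lemma key_zpow (d : ℕ) (q ζ : ℂ) (hζ0 : ζ ≠ 0) (hζ2 : ζ ^ 2 = q)
    (hζd : ζ ^ d ^ 2 = 1) (hqd : q ^ d = 1) (A B a b : ℤ)
    (h : A = B + (2 * d * a + d ^ 2 * b)) : ζ ^ A = ζ ^ B := by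
  have h2d : ζ ^ ((2 * d : ℕ) : ℤ) = 1 := by
    rw [zpow_natCast, pow_mul, hζ2, hqd]
  have hd2 : ζ ^ ((d ^ 2 : ℕ) : ℤ) = 1 := by rw [zpow_natCast, hζd]
  rw [h, zpow_add₀ hζ0, zpow_add₀ hζ0]
  have e1 : ζ ^ (2 * (d : ℤ) * a) = 1 := by
    rw [show 2 * (d : ℤ) * a = ((2 * d : ℕ) : ℤ) * a by push_cast; ring,
      zpow_mul, h2d, one_zpow]
  have e2 : ζ ^ ((d : ℤ) ^ 2 * b) = 1 := by
    rw [show (d : ℤ) ^ 2 * b = ((d ^ 2 : ℕ) : ℤ) * b by push_cast; ring,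
      zpow_mul, hd2, one_zpow]
  rw [e1, e2, mul_one, mul_one]

lemma val_congr {d : ℕ} [NeZero d] {l1 l2 k1 k2 : ZMod d} (h : l1 + l2 = k1 + k2) :
    (d : ℤ) ∣ ((k1.val : ℤ) + k2.val) - ((l1.val : ℤ) + l2.val) := by
  have h1 : (((l1.val + l2.val : ℕ) : ZMod d)) = ((k1.val + k2.val : ℕ) : ZMod d) := by
    push_cast [ZMod.natCast_val, ZMod.cast_id]
    exact h
  have h2 := (Int.natCast_modEq_iff.mpr ((ZMod.natCast_eq_natCast_iff _ _ _).mp h1)).dvd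
  push_cast at h2
  exact h2

lemma val_add_congr {d : ℕ} [NeZero d] (l1 l2 : ZMod d) :
    (d : ℤ) ∣ ((l1.val : ℤ) + l2.val) - ((l1 + l2).val : ℤ) := by
  have h1 : ((((l1 + l2).val : ℕ)) : ZMod d) = (((l1.val + l2.val : ℕ)) : ZMod d) := by
    push_cast [ZMod.natCast_val, ZMod.cast_id]
    try rfl
  have h2 := (Int.natCast_modEq_iff.mpr ((ZMod.natCast_eq_natCast_iff _ _ _).mp h1)).dvd
  push_cast at h2
  exact h2

lemma L1 (ζ : ℂ) (hζ0 : ζ ≠ 0) (s : ℕ) (X : ℤ) :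
    ζ ^ (s ^ 2) * ((ζ ^ 2) ^ X)⁻¹ = ζ ^ ((s : ℤ) ^ 2 - 2 * X) := by
  rw [← zpow_natCast ζ (s ^ 2), ← zpow_natCast ζ 2, ← zpow_mul, ← zpow_neg,
    ← zpow_add₀ hζ0]
  congr 1 <;> push_cast <;> ring_nf

lemma L2 (ζ : ℂ) (hζ0 : ζ ≠ 0) (x y z : ℕ) :
    (ζ ^ x)⁻¹ * ζ ^ y * (ζ ^ 2) ^ z = ζ ^ (-(x : ℤ) + y + 2 * z) := by
  rw [← pow_mul, ← zpow_natCast ζ x, ← zpow_natCast ζ y, ← zpow_natCast ζ (2 * z),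
    ← zpow_neg, ← zpow_add₀ hζ0, ← zpow_add₀ hζ0]
  congr 1 <;> push_cast <;> ring_nf

lemma L3 (ζ : ℂ) (hζ0 : ζ ≠ 0) (w x y : ℕ) :
    (ζ ^ 2) ^ w * (ζ ^ x * (ζ ^ y)⁻¹) = ζ ^ (2 * (w : ℤ) + x - y) := by
  rw [← pow_mul, ← zpow_natCast ζ (2 * w), ← zpow_natCast ζ x, ← zpow_natCast ζ y,
    ← zpow_neg, ← zpow_add₀ hζ0, ← zpow_add₀ hζ0]
  congr 1 <;> push_cast <;> ring_nf

/-- the string Fourier transform on 2-qudits factors in two ways: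
`F_s = (G⁻¹ ⊗ G) · C_{1,X}⁻¹ · (F ⊗ 1) · C_{1,X}` and
`F_s = C_{X,1}⁻¹ · (1 ⊗ F) · C_{X,1} · (G ⊗ G⁻¹)`. -/
theorem stmt_15 (d : ℕ) [NeZero d] (q ζ : ℂ)
    (hq : q = Complex.exp (2 * Real.pi * Complex.I / d))
    (hζ2 : ζ ^ 2 = q) (hζd : ζ ^ d ^ 2 = 1) :
    SFT2 d q ζ
        = ((Gmat d ζ)⁻¹ ⊗ₖ Gmat d ζ) * (C1X d)⁻¹ *
            (Fmat d q ⊗ₖ (1 : Matrix (ZMod d) (ZMod d) ℂ)) * C1X d ∧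
    SFT2 d q ζ
        = (CX1 d)⁻¹ * ((1 : Matrix (ZMod d) (ZMod d) ℂ) ⊗ₖ Fmat d q) * CX1 d *
            (Gmat d ζ ⊗ₖ (Gmat d ζ)⁻¹) := by
  have hζ0 : ζ ≠ 0 := by
    intro h
    rw [h, zero_pow (pow_ne_zero 2 (NeZero.ne d))] at hζd
    exact zero_ne_one hζd
  have hd : (d : ℂ) ≠ 0 := Nat.cast_ne_zero.mpr (NeZero.ne d)
  have hqd : q ^ d = 1 := by
    rw [hq, ← Complex.exp_nat_mul]
    rw [show (d : ℂ) * (2 * Real.pi * Complex.I / d) = 2 * Real.pi * Complex.I by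
      rw [mul_div_assoc']; exact mul_div_cancel_left₀ _ hd]
    exact Complex.exp_two_pi_mul_I
  rw [C1X_inv, CX1_inv, Gmat_inv d ζ hζ0]
  constructor
  · ext ⟨l1, l2⟩ ⟨k1, k2⟩
    simp [Matrix.mul_apply, SFT2, Ginv, Gmat, C1X, C1Xinv, Fmat,
      Fintype.sum_prod_type, Matrix.one_apply, Prod.ext_iff, ite_and]
    rw [Finset.sum_eq_single l1 (fun b _ hb => by simp [Ne.symm hb]) (by simp)]
    have hcond : (l2 = k2 + k1 - l1) ↔ (l1 + l2 = k1 + k2) := by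
      constructor <;> intro h <;> linear_combination h
    simp only [if_pos rfl, hcond, if_true]
    split
    case isFalse => rfl
    case isTrue h =>
      have hrw : k2 + k1 - l1 = l2 := by linear_combination -h
      rw [hrw, ← hζ2]
      simp only [← ZMod.natCast_val]
      obtain ⟨m, hm⟩ := val_add_congr l1 l2
      obtain ⟨n, hn⟩ := val_congr h
      have E : ζ ^ ((l1 + l2).val ^ 2) *
            ((ζ ^ 2) ^ ((l1.val : ℤ) * (k2.val : ℤ)))⁻¹
          = (ζ ^ (l1.val ^ 2))⁻¹ * ζ ^ (l2.val ^ 2) * (ζ ^ 2) ^ (k1.val * l1.val) := by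
        rw [L1 ζ hζ0, L2 ζ hζ0]
        apply key_zpow d q ζ hζ0 hζ2 hζd hqd _ _
          (-(m * ((l1.val : ℤ) + l2.val) + n * l1.val)) (m ^ 2)
        push_cast
        linear_combination ((d : ℤ) * m - ((l1 + l2).val : ℤ) - l1.val - l2.val) * hm +
          (-2 * (l1.val : ℤ)) * hn
      linear_combination (Real.sqrt d : ℂ)⁻¹ * E
  · ext ⟨l1, l2⟩ ⟨k1, k2⟩
    simp [Matrix.mul_apply, SFT2, Ginv, Gmat, CX1, CX1inv, Fmat,
      Fintype.sum_prod_type, Matrix.one_apply, Prod.ext_iff, ite_and]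
    rw [Finset.sum_eq_single l2 (fun b _ hb => by simp [Ne.symm hb]) (by simp)]
    have hcond : (l1 = k1 + k2 - l2) ↔ (l1 + l2 = k1 + k2) := by
      constructor <;> intro h <;> linear_combination h
    simp only [if_pos rfl, hcond, if_true]
    split
    case isFalse => simp
    case isTrue h =>
      rw [← hζ2]
      simp only [← ZMod.natCast_val]
      obtain ⟨m, hm⟩ := val_add_congr l1 l2
      obtain ⟨n, hn⟩ := val_congr h
      have E : ζ ^ ((l1 + l2).val ^ 2) *
            ((ζ ^ 2) ^ ((l1.val : ℤ) * (k2.val : ℤ)))⁻¹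
          = (ζ ^ 2) ^ (k2.val * l2.val) * (ζ ^ (k1.val ^ 2) * (ζ ^ (k2.val ^ 2))⁻¹) := by
        rw [L1 ζ hζ0, L3 ζ hζ0]
        apply key_zpow d q ζ hζ0 hζ2 hζd hqd _ _
          (-(m + n) * ((k1.val : ℤ) + k2.val) + n * k2.val) ((m + n) ^ 2)
        push_cast
        linear_combination
          (-( ((l1 + l2).val : ℤ) + k1.val + k2.val - d * (m + n))) * hm +
          (-( ((l1 + l2).val : ℤ) + k1.val + k2.val - d * (m + n)) + 2 * (k2.val : ℤ)) * hn
      linear_combination (Real.sqrt d : ℂ)⁻¹ * E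
end

section
/- Correctness of 1-qudit quantum teleportation: for every vector φ ∈ ℂ^{ZMod d} and all measurement outcomes ℓ₁, ℓ₂ ∈ ZMod d, one has Z^{ℓ₁} X^{ℓ₂} · P_{ℓ₁,ℓ₂}((F⁻¹ ⊗ 1 ⊗ 1)(C_{1,X} ⊗ 1)(φ ⊗ |Max⟩₂)) = d⁻¹ · φ, where P_{ℓ₁,ℓ₂} : ℂ^{(ZMod d)³} → ℂ^{ZMod d} is the partial pairing against e_{ℓ₁} ⊗ e_{ℓ₂} on the first two legs, (P_{ℓ₁,ℓ₂} v)(m) = v(ℓ₁,ℓ₂,m). Thus after Alice applies the controlled-X and inverse Fourier gates and measures outcomes ℓ₁, ℓ₂, Bob recovers φ by applying X^{ℓ₂} then Z^{ℓ₁}. -/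
open Kronecker

/-- The qudit Pauli matrix `X`, with `X e_k = e_{k+1}`. -/
noncomputable def Xmat (d : ℕ) : Matrix (ZMod d) (ZMod d) ℂ :=
  Matrix.of fun j k => if j = k + 1 then 1 else 0

/-- `C_{1,X} ⊗ 1` acting on the 3-qudit space: `e_{(k₁,k₂,k₃)} ↦ e_{(k₁,k₂+k₁,k₃)}`. -/
noncomputable def C1X3 (d : ℕ) :
    Matrix (ZMod d × ZMod d × ZMod d) (ZMod d × ZMod d × ZMod d) ℂ :=
  Matrix.of fun j k => if j = (k.1, k.2.1 + k.1, k.2.2) then 1 else 0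

/-- `F⁻¹ ⊗ 1 ⊗ 1` acting on the 3-qudit space (inverse Fourier on the first leg). -/
noncomputable def Finv3 (d : ℕ) [NeZero d] (q : ℂ) :
    Matrix (ZMod d × ZMod d × ZMod d) (ZMod d × ZMod d × ZMod d) ℂ :=
  (Fmat d q)⁻¹ ⊗ₖ (1 : Matrix (ZMod d × ZMod d) (ZMod d × ZMod d) ℂ)

section Aux
variable {d : ℕ} [NeZero d] {q : ℂ}

set_option linter.unusedSectionVars false

private lemma sum_zmod_val' (f : ℕ → ℂ) :
    ∑ l : ZMod d, f l.val = ∑ i ∈ Finset.range d, f i :=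
  Finset.sum_nbij' (fun l => l.val) (fun i => (i : ZMod d))
    (fun a _ => Finset.mem_range.mpr (ZMod.val_lt a))
    (fun a _ => Finset.mem_univ _)
    (fun a _ => by simp [ZMod.natCast_val, ZMod.cast_id])
    (fun a ha => ZMod.val_cast_of_lt (Finset.mem_range.mp ha))
    (fun a _ => rfl)

private lemma qd' (hq : q = Complex.exp (2 * Real.pi * Complex.I / d)) : q ^ d = 1 := by
  rw [hq, ← Complex.exp_nat_mul, mul_div_cancel₀]
  · exact Complex.exp_two_pi_mul_I
  · exact_mod_cast (NeZero.ne d)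

private lemma qmod' (h1 : q ^ d = 1) (n : ℕ) : q ^ n = q ^ (n % d) := by
  conv_lhs => rw [← Nat.div_add_mod n d]
  rw [pow_add, pow_mul, h1, one_pow, one_mul]

private lemma qval_add' (h1 : q ^ d = 1) (a b : ZMod d) :
    q ^ a.val * q ^ b.val = q ^ (a + b).val := by
  rw [← pow_add, qmod' h1, ZMod.val_add, ← qmod' h1]

private lemma sum_q' (hq : q = Complex.exp (2 * Real.pi * Complex.I / d)) (c : ZMod d) :
    ∑ l : ZMod d, (q ^ c.val) ^ l.val = if c = 0 then (d : ℂ) else 0 := by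
  have hprim : IsPrimitiveRoot q d := hq ▸ Complex.isPrimitiveRoot_exp d (NeZero.ne d)
  rw [sum_zmod_val' (fun i => (q ^ c.val) ^ i)]
  by_cases hc : c = 0
  · simp [hc, Finset.sum_const, if_pos]
  · rw [if_neg hc, geom_sum_eq, ← pow_mul, mul_comm, pow_mul, hprim.pow_eq_one, one_pow,
      sub_self, zero_div]
    intro h
    have : c.val = 0 :=
      Nat.eq_zero_of_dvd_of_lt ((hprim.pow_eq_one_iff_dvd c.val).mp h) (ZMod.val_lt c)
    exact hc (by simpa [ZMod.val_eq_zero] using this)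

private lemma csq' : ((Real.sqrt d : ℂ)⁻¹) * ((Real.sqrt d : ℂ)⁻¹) = (d : ℂ)⁻¹ := by
  rw [← mul_inv, ← Complex.ofReal_mul, Real.mul_self_sqrt (Nat.cast_nonneg d)]
  norm_num

private lemma Fmat_inv' (hq : q = Complex.exp (2 * Real.pi * Complex.I / d)) :
    (Fmat d q)⁻¹ = Matrix.of fun l k => (Real.sqrt d : ℂ)⁻¹ * q ^ ((-k).val * l.val) := by
  have h1 : q ^ d = 1 := qd' hq
  apply Matrix.inv_eq_right_inv
  ext j k
  simp only [Matrix.mul_apply, Fmat, Matrix.of_apply, Matrix.one_apply]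
  have : ∀ l : ZMod d,
      (Real.sqrt d : ℂ)⁻¹ * q ^ (l.val * j.val) * ((Real.sqrt d : ℂ)⁻¹ * q ^ ((-k).val * l.val))
      = (d : ℂ)⁻¹ * (q ^ (j + -k).val) ^ l.val := by
    intro l
    rw [mul_comm l.val j.val, pow_mul, pow_mul, mul_mul_mul_comm, csq', ← mul_pow,
      qval_add' h1, ← pow_mul, mul_comm ((j + -k).val), pow_mul]
  rw [Finset.sum_congr rfl (fun l _ => this l), ← Finset.mul_sum, sum_q' hq]
  by_cases hjk : j = k
  · rw [if_pos hjk, if_pos (by simp [hjk]),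
      inv_mul_cancel₀ (by exact_mod_cast NeZero.ne d)]
  · rw [if_neg hjk, if_neg (fun h => hjk (by rwa [add_neg_eq_zero] at h)), mul_zero]

private lemma Xpow' (n : ℕ) :
    Xmat d ^ n = Matrix.of fun j k => if j = k + (n : ZMod d) then 1 else 0 := by
  induction n with
  | zero => ext j k; simp [Matrix.one_apply, eq_comm]
  | succ n ih =>
    rw [pow_succ, ih]
    ext j k
    simp only [Matrix.mul_apply, Matrix.of_apply, Xmat]
    rw [Finset.sum_eq_single (k + 1)]
    · simp only [if_pos rfl, mul_one]
      push_cast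
      ring_nf
    · intro b _ hb; rw [if_neg hb, mul_zero]
    · intro h; exact absurd (Finset.mem_univ _) h

private lemma Zpow' (n : ℕ) :
    Zmat d q ^ n = Matrix.of fun j k => if j = k then q ^ (n * k.val) else 0 := by
  induction n with
  | zero => ext j k; simp [Matrix.one_apply]
  | succ n ih =>
    rw [pow_succ, ih]
    ext j k
    simp only [Matrix.mul_apply, Matrix.of_apply, Zmat]
    rw [Finset.sum_eq_single k]
    · by_cases h : j = k
      · rw [if_pos h, if_pos rfl, if_pos h, ← pow_add]
        ring_nf
      · rw [if_neg h, if_neg h, zero_mul]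
    · intro b _ hb; rw [if_neg hb, mul_zero]
    · intro h; exact absurd (Finset.mem_univ _) h

private lemma ZXmulVec (a b : ℕ) (w : ZMod d → ℂ) (m : ZMod d) :
    (Zmat d q ^ a * Xmat d ^ b).mulVec w m
      = q ^ (a * m.val) * w (m - (b : ZMod d)) := by
  have hprod : Zmat d q ^ a * Xmat d ^ b
      = Matrix.of fun j k => if j = k + (b : ZMod d) then q ^ (a * j.val) else 0 := by
    rw [Zpow', Xpow']
    ext j k
    rw [Matrix.mul_apply, Finset.sum_eq_single j]
    · by_cases h : j = k + (b : ZMod d)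
      · simp [h]
      · simp [h]
    · intro l _ hl
      rw [Matrix.of_apply, if_neg (fun h => hl h.symm), zero_mul]
    · intro h; exact absurd (Finset.mem_univ _) h
  rw [hprod]
  simp only [Matrix.mulVec, dotProduct, Matrix.of_apply]
  rw [Finset.sum_eq_single (m - (b : ZMod d))]
  · rw [if_pos (by ring)]
  · intro k _ hk
    rw [if_neg (fun h => hk (by rw [h, add_sub_cancel_right])), zero_mul]
  · intro h; exact absurd (Finset.mem_univ _) h

private lemma C1X3_mulVec (v : ZMod d × ZMod d × ZMod d → ℂ) (j : ZMod d × ZMod d × ZMod d) :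
    (C1X3 d).mulVec v j = v (j.1, j.2.1 - j.1, j.2.2) := by
  simp only [Matrix.mulVec, dotProduct, C1X3, Matrix.of_apply]
  rw [Finset.sum_eq_single (j.1, j.2.1 - j.1, j.2.2)]
  · simp
  · intro b _ hb
    rw [if_neg, zero_mul]
    intro h
    apply hb
    rw [h]
    simp
  · intro h; exact absurd (Finset.mem_univ _) h

end Aux

/-- correctness of 1-qudit quantum teleportation.  For every vector `φ` and
all measurement outcomes `ℓ₁, ℓ₂`, applying `(F⁻¹ ⊗ 1 ⊗ 1)(C_{1,X} ⊗ 1)` to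
`φ ⊗ |Max⟩₂`, pairing the first two legs against `e_{ℓ₁} ⊗ e_{ℓ₂}`, and then applying
`X^{ℓ₂}` followed by `Z^{ℓ₁}`, yields `d⁻¹ · φ`. -/
theorem stmt_17 (d : ℕ) [NeZero d] (q ζ : ℂ)
    (hq : q = Complex.exp (2 * Real.pi * Complex.I / d))
    (hζ2 : ζ ^ 2 = q) (hζd : ζ ^ d ^ 2 = 1)
    (φ : ZMod d → ℂ) (l1 l2 : ZMod d) :
    (Zmat d q ^ l1.val * Xmat d ^ l2.val).mulVec
        (fun m : ZMod d =>
          (Finv3 d q * C1X3 d).mulVec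
            (fun p : ZMod d × ZMod d × ZMod d =>
              φ p.1 * ((Real.sqrt d : ℂ)⁻¹ * if p.2.2 = -p.2.1 then 1 else 0))
            (l1, l2, m))
      = (d : ℂ)⁻¹ • φ := by
  have h1 : q ^ d = 1 := qd' hq
  set c : ℂ := (Real.sqrt d : ℂ)⁻¹ with hc
  -- first compute the inner vector
  have hinner : ∀ m : ZMod d,
      (Finv3 d q * C1X3 d).mulVec
          (fun p : ZMod d × ZMod d × ZMod d =>
            φ p.1 * (c * if p.2.2 = -p.2.1 then 1 else 0)) (l1, l2, m)
        = (d : ℂ)⁻¹ * q ^ ((-(m + l2)).val * l1.val) * φ (m + l2) := by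
    intro m
    rw [← Matrix.mulVec_mulVec]
    have hC : (C1X3 d).mulVec
        (fun p : ZMod d × ZMod d × ZMod d =>
          φ p.1 * (c * if p.2.2 = -p.2.1 then 1 else 0))
        = fun j => φ j.1 * (c * if j.2.2 = -(j.2.1 - j.1) then 1 else 0) := by
      funext j
      rw [C1X3_mulVec]
    rw [hC]
    simp only [Finv3, Matrix.mulVec, dotProduct, Fmat_inv' hq,
      Matrix.kroneckerMap_apply, Fintype.sum_prod_type]
    have hrow : ∀ k1 : ZMod d,
        (∑ k2 : ZMod d, ∑ k3 : ZMod d,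
          Matrix.of (fun l k => (Real.sqrt d : ℂ)⁻¹ * q ^ ((-k).val * l.val)) l1 k1
            * (1 : Matrix (ZMod d × ZMod d) (ZMod d × ZMod d) ℂ)
                ((l1, l2, m) : ZMod d × ZMod d × ZMod d).2 ((k1, k2, k3) : ZMod d × ZMod d × ZMod d).2
            * (φ k1 * (c * if k3 = -(k2 - k1) then 1 else 0)))
        = c * q ^ ((-k1).val * l1.val)
            * (φ k1 * (c * if m = -(l2 - k1) then 1 else 0)) := by
      intro k1
      rw [Finset.sum_eq_single l2]
      · rw [Finset.sum_eq_single m]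
        · rw [Matrix.one_apply, if_pos rfl, mul_one, Matrix.of_apply]
        · intro k3 _ hk3
          rw [Matrix.one_apply, if_neg (by simp [Prod.ext_iff]; exact fun h => hk3 h.symm), mul_zero, zero_mul]
        · intro h; exact absurd (Finset.mem_univ _) h
      · intro k2 _ hk2
        apply Finset.sum_eq_zero
        intro k3 _
        rw [Matrix.one_apply, if_neg (by simp [Prod.ext_iff]; intro h; exact absurd h hk2.symm),
          mul_zero, zero_mul]
      · intro h; exact absurd (Finset.mem_univ _) h
    rw [Finset.sum_congr rfl (fun k1 _ => hrow k1)]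
    rw [Finset.sum_eq_single (m + l2)]
    · rw [if_pos (by ring), mul_one]
      calc c * q ^ ((-(m + l2)).val * l1.val) * (φ (m + l2) * c)
          = (c * c) * q ^ ((-(m + l2)).val * l1.val) * φ (m + l2) := by ring
        _ = (d : ℂ)⁻¹ * q ^ ((-(m + l2)).val * l1.val) * φ (m + l2) := by rw [hc, csq']
    · intro k1 _ hk1
      rw [if_neg (fun h => hk1 (by rw [h]; ring))]
      ring
    · intro h; exact absurd (Finset.mem_univ _) h
  funext m
  rw [show (fun m : ZMod d =>
        (Finv3 d q * C1X3 d).mulVec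
          (fun p : ZMod d × ZMod d × ZMod d =>
            φ p.1 * (c * if p.2.2 = -p.2.1 then 1 else 0)) (l1, l2, m))
      = fun m => (d : ℂ)⁻¹ * q ^ ((-(m + l2)).val * l1.val) * φ (m + l2) from funext hinner]
  rw [ZXmulVec]
  rw [ZMod.natCast_val, ZMod.cast_id, sub_add_cancel]
  have : q ^ (l1.val * m.val) * q ^ ((-m).val * l1.val) = 1 := by
    rw [mul_comm l1.val m.val, pow_mul, pow_mul, ← mul_pow, qval_add' h1, add_neg_cancel,
      ZMod.val_zero, pow_zero, one_pow]
  calc q ^ (l1.val * m.val) * ((d : ℂ)⁻¹ * q ^ ((-m).val * l1.val) * φ m)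
      = (q ^ (l1.val * m.val) * q ^ ((-m).val * l1.val)) * ((d : ℂ)⁻¹ * φ m) := by ring
    _ = (d : ℂ)⁻¹ • φ m := by rw [this, one_mul]; rfl
end
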